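/- A sequence X_1, X_2, ... of {0,1}-valued random variables is exchangeable if and only if there exists a probability measure μ on [0,1] such that the sequence is distributed as a mixture of i.i.d. Bernoulli(p) sequences with p drawn from μ (de Finetti's theorem). -/

import Mathlib

/-!
Exchangeability makes the probability of a finite 0/1 pattern depend only on its number `k` of
ones and `d` of zeros; call it `q k d`. Conditioning on one more coordinate gives
`q k d = q (k + 1) d + q k (d + 1)`, with `q ≥ 0` and `q 0 0 = 1`, and Hausdorff's argument turns
such a table into a mixing measure. Iterating the recursion, the weights `C(N, i) q i (N - i)` form
a probability distribution on the grid `{i / N}` whose `k`-th factorial moment is exactly `q k 0`,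
so its ordinary `k`-th moment tends to `q k 0`. A weak cluster point `ν` of these distributions on
the compact unit interval therefore has moments `q k 0`, and the recursion then forces
`q k d = ∫ p ^ k (1 - p) ^ d dν`. The converse holds because the Bernoulli product is invariant
under permutations.
-/

open MeasureTheory Finset Filter Topology unitInterval

theorem norm_prod_sub_prod_le_sum {ι R : Type*} [NormedCommRing R] [NormOneClass R]
    (s : Finset ι) {a b : ι → R} (ha : ∀ i ∈ s, ‖a i‖ ≤ 1) (hb : ∀ i ∈ s, ‖b i‖ ≤ 1) :
    ‖∏ i ∈ s, a i - ∏ i ∈ s, b i‖ ≤ ∑ i ∈ s, ‖a i - b i‖ := by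
  classical
  induction s using Finset.induction_on with
  | empty => simp
  | insert j s hj ih =>
    simp only [forall_mem_insert] at ha hb
    rw [prod_insert hj, prod_insert hj, sum_insert hj,
      show a j * ∏ i ∈ s, a i - b j * ∏ i ∈ s, b i
        = a j * (∏ i ∈ s, a i - ∏ i ∈ s, b i) + (a j - b j) * ∏ i ∈ s, b i by ring]
    have hprod : ‖∏ i ∈ s, b i‖ ≤ 1 :=
      (Finset.norm_prod_le _ _).trans (prod_le_one (fun _ _ => norm_nonneg _) hb.2)
    calc _ ≤ ‖a j‖ * ‖∏ i ∈ s, a i - ∏ i ∈ s, b i‖ + ‖a j - b j‖ * ‖∏ i ∈ s, b i‖ :=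
          (norm_add_le _ _).trans (add_le_add (norm_mul_le _ _) (norm_mul_le _ _))
      _ ≤ 1 * ∑ i ∈ s, ‖a i - b i‖ + ‖a j - b j‖ * 1 := by
          gcongr
          · exact ha.1
          · exact ih ha.2 hb.2
      _ = _ := by ring

theorem abs_div_pow_sub_choose_div_choose_le {i N k : ℕ} (hiN : i ≤ N) (hN : 0 < N) :
    |((i : ℝ) / N) ^ k - i.choose k / N.choose k| ≤ k ^ 2 / N := by
  rcases lt_or_ge i k with hik | hki
  · have hx : (i : ℝ) / N ∈ I := div_mem (by positivity) (by positivity) (by exact_mod_cast hiN)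
    rw [Nat.choose_eq_zero_of_lt hik, Nat.cast_zero, zero_div, sub_zero,
      abs_of_nonneg (pow_nonneg hx.1 k)]
    calc ((i : ℝ) / N) ^ k ≤ i / N := pow_le_of_le_one hx.1 hx.2 (by omega)
      _ ≤ k ^ 2 / N := by
        gcongr
        exact_mod_cast hik.le.trans (Nat.le_self_pow two_ne_zero k)
  have hN : (0 : ℝ) < N := by exact_mod_cast hN
  have hiN' : (i : ℝ) ≤ N := by exact_mod_cast hiN
  have hratio : (i.choose k : ℝ) / N.choose k = ∏ l ∈ range k, ((i : ℝ) - l) / (N - l) := by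
    rw [Nat.cast_choose_eq_descPochhammer_div, Nat.cast_choose_eq_descPochhammer_div,
      descPochhammer_eval_eq_prod_range, descPochhammer_eval_eq_prod_range,
      div_div_div_cancel_right₀ (by positivity), prod_div_distrib]
  have hpow : ((i : ℝ) / N) ^ k = ∏ _l ∈ range k, (i : ℝ) / N := by rw [prod_const, card_range]
  have hfactor : ∀ l ∈ range k, 0 ≤ (i : ℝ) - l ∧ (i : ℝ) - l ≤ N - l ∧ 0 < (N : ℝ) - l := by
    intro l hl
    have hli : (l : ℝ) < i := by exact_mod_cast (mem_range.1 hl).trans_le hki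
    refine ⟨by linarith, by linarith, by linarith⟩
  rw [hratio, hpow]
  calc _ ≤ ∑ l ∈ range k, |(i : ℝ) / N - (i - l) / (N - l)| := by
        simp only [← Real.norm_eq_abs]
        refine norm_prod_sub_prod_le_sum _ (fun l _ => ?_) (fun l hl => ?_)
        · rw [Real.norm_eq_abs, abs_of_nonneg (by positivity)]
          exact div_le_one_of_le₀ hiN' hN.le
        · obtain ⟨h0, h1, h2⟩ := hfactor l hl
          rw [Real.norm_eq_abs, abs_of_nonneg (div_nonneg h0 h2.le)]
          exact div_le_one_of_le₀ h1 h2.le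
    _ ≤ ∑ _l ∈ range k, (k : ℝ) / N := by
        refine sum_le_sum fun l hl => ?_
        obtain ⟨h0, h1, h2⟩ := hfactor l hl
        have hlk : (l : ℝ) ≤ k := by exact_mod_cast (mem_range.1 hl).le
        have hlN : (l : ℝ) * (N - i) ≤ k * (N - l) :=
          mul_le_mul hlk (by linarith) (by linarith) (by positivity)
        rw [div_sub_div _ _ hN.ne' h2.ne',
          abs_of_nonneg (div_nonneg (by nlinarith) (mul_pos hN h2).le),
          div_le_div_iff₀ (mul_pos hN h2) hN]
        nlinarith
    _ = k ^ 2 / N := by rw [sum_const, card_range, nsmul_eq_mul]; ring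

/-- On `antidiagonal N` this is the grid point `i / N`; the form `i / (i + j)` lies in `I` without
a side condition. -/
noncomputable def gridPoint (i j : ℕ) : I :=
  ⟨i / (i + j), div_mem (Nat.cast_nonneg _) (by positivity)
    (le_add_of_nonneg_right (Nat.cast_nonneg _))⟩

@[simp]
theorem coe_gridPoint (i j : ℕ) : (gridPoint i j : ℝ) = i / (i + j) := rfl

noncomputable def gridMeasure (q : ℕ → ℕ → ℝ) (N : ℕ) : Measure I :=
  ∑ ij ∈ antidiagonal N,
    ENNReal.ofReal (N.choose ij.1 * q ij.1 ij.2) • Measure.dirac (gridPoint ij.1 ij.2)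

theorem integral_gridMeasure {q : ℕ → ℕ → ℝ} (hq0 : ∀ k d, 0 ≤ q k d) (N : ℕ) (f : I → ℝ) :
    ∫ x, f x ∂gridMeasure q N
      = ∑ ij ∈ antidiagonal N, N.choose ij.1 * q ij.1 ij.2 * f (gridPoint ij.1 ij.2) := by
  rw [gridMeasure, integral_finsetSum_measure]
  · refine sum_congr rfl fun ij _ => ?_
    rw [integral_smul_measure, integral_dirac,
      ENNReal.toReal_ofReal (mul_nonneg (Nat.cast_nonneg _) (hq0 _ _)), smul_eq_mul]
  · intro ij _
    exact (integrable_dirac enorm_lt_top).smul_measure ENNReal.ofReal_ne_top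

section MomentTable

variable {q : ℕ → ℕ → ℝ} (hq : ∀ k d, q k d = q (k + 1) d + q k (d + 1))
include hq

theorem sum_antidiagonal_choose_mul_eq (n k d : ℕ) :
    ∑ ij ∈ antidiagonal n, (n.choose ij.1 : ℝ) * q (k + ij.1) (d + ij.2) = q k d := by
  induction n generalizing k d with
  | zero => simp
  | succ n ih =>
    rw [sum_antidiagonal_choose_succ_mul (fun i j => q (k + i) (d + j)), hq k d,
      ← ih (k + 1) d, ← ih k (d + 1), add_comm]
    congr 1 <;> refine sum_congr rfl fun ij hij => ?_
    · rw [Nat.choose_symm_of_eq_add (mem_antidiagonal.1 hij).symm,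
        show k + (ij.1 + 1) = k + 1 + ij.1 by omega]
    · rw [show d + (ij.2 + 1) = d + 1 + ij.2 by omega]

theorem sum_antidiagonal_choose_mul_choose_eq {N k : ℕ} (hk : k ≤ N) :
    ∑ ij ∈ antidiagonal N, (N.choose ij.1 : ℝ) * ij.1.choose k * q ij.1 ij.2
      = N.choose k * q k 0 := by
  obtain ⟨n, rfl⟩ := Nat.exists_eq_add_of_le hk
  rw [Nat.sum_antidiagonal_eq_sum_range_succ
      (fun i j => ((k + n).choose i : ℝ) * i.choose k * q i j),
    ← sum_antidiagonal_choose_mul_eq hq n k 0, Nat.sum_antidiagonal_eq_sum_range_succ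
      (fun i j => (n.choose i : ℝ) * q (k + i) (0 + j)), mul_sum, Nat.succ_eq_add_one,
    add_assoc, sum_range_add, sum_eq_zero fun i hi => by
      simp [Nat.choose_eq_zero_of_lt (mem_range.1 hi)], zero_add]
  refine sum_congr rfl fun i _ => ?_
  have hchoose := Nat.choose_mul (n := k + n) (k := k + i) (Nat.le_add_right k i)
  simp only [Nat.add_sub_cancel_left] at hchoose
  rw [Nat.add_sub_add_left, zero_add, ← mul_assoc, ← Nat.cast_mul, hchoose]
  push_cast
  ring

theorem sum_antidiagonal_choose_mul_eq_one (h00 : q 0 0 = 1) (N : ℕ) :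
    ∑ ij ∈ antidiagonal N, (N.choose ij.1 : ℝ) * q ij.1 ij.2 = 1 := by
  simpa [h00] using sum_antidiagonal_choose_mul_eq hq N 0 0

theorem isProbabilityMeasure_gridMeasure (hq0 : ∀ k d, 0 ≤ q k d) (h00 : q 0 0 = 1) (N : ℕ) :
    IsProbabilityMeasure (gridMeasure q N) := by
  constructor
  simp only [gridMeasure, Measure.coe_finsetSum, Finset.sum_apply, Measure.smul_apply,
    measure_univ, smul_eq_mul, mul_one]
  rw [← ENNReal.ofReal_sum_of_nonneg fun _ _ => mul_nonneg (Nat.cast_nonneg _) (hq0 _ _),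
    sum_antidiagonal_choose_mul_eq_one hq h00, ENNReal.ofReal_one]

theorem abs_integral_pow_gridMeasure_sub_le (hq0 : ∀ k d, 0 ≤ q k d) (h00 : q 0 0 = 1)
    {k N : ℕ} (hk : k ≤ N) (hN : 0 < N) :
    |∫ x, (x : ℝ) ^ k ∂gridMeasure q N - q k 0| ≤ k ^ 2 / N := by
  have hchoose : (N.choose k : ℝ) ≠ 0 := by exact_mod_cast (Nat.choose_pos hk).ne'
  have hmoment : q k 0 = ∑ ij ∈ antidiagonal N,
      N.choose ij.1 * q ij.1 ij.2 * ((ij.1.choose k : ℝ) / N.choose k) := by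
    rw [← mul_div_cancel_left₀ (q k 0) hchoose, ← sum_antidiagonal_choose_mul_choose_eq hq hk,
      sum_div]
    refine sum_congr rfl fun ij _ => ?_
    ring
  rw [integral_gridMeasure hq0, hmoment, ← sum_sub_distrib]
  calc _ ≤ ∑ ij ∈ antidiagonal N, N.choose ij.1 * q ij.1 ij.2 * ((k : ℝ) ^ 2 / N) := by
        refine (abs_sum_le_sum_abs _ _).trans (sum_le_sum fun ij hij => ?_)
        have hij : ij.1 + ij.2 = N := mem_antidiagonal.1 hij
        have hw : 0 ≤ (N.choose ij.1 : ℝ) * q ij.1 ij.2 := mul_nonneg (Nat.cast_nonneg _) (hq0 _ _)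
        rw [← mul_sub, abs_mul, abs_of_nonneg hw]
        gcongr
        rw [coe_gridPoint, show (ij.1 : ℝ) + ij.2 = N by exact_mod_cast hij]
        exact abs_div_pow_sub_choose_div_choose_le (by omega) hN
    _ = k ^ 2 / N := by rw [← sum_mul, sum_antidiagonal_choose_mul_eq_one hq h00, one_mul]

theorem tendsto_integral_pow_gridMeasure (hq0 : ∀ k d, 0 ≤ q k d) (h00 : q 0 0 = 1) (k : ℕ) :
    Tendsto (fun N => ∫ x, (x : ℝ) ^ k ∂gridMeasure q N) atTop (𝓝 (q k 0)) := by
  rw [tendsto_iff_norm_sub_tendsto_zero]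
  refine squeeze_zero' (Eventually.of_forall fun _ => norm_nonneg _) ?_
    (tendsto_const_div_atTop_nhds_zero_nat ((k : ℝ) ^ 2))
  filter_upwards [eventually_ge_atTop (max k 1)] with N hN
  exact abs_integral_pow_gridMeasure_sub_le hq hq0 h00 (le_of_max_le_left hN)
    (le_of_max_le_right hN)

theorem exists_probabilityMeasure_integral_pow_eq (hq0 : ∀ k d, 0 ≤ q k d) (h00 : q 0 0 = 1) :
    ∃ ν : ProbabilityMeasure I, ∀ k, ∫ x : I, (x : ℝ) ^ k ∂(ν : Measure I) = q k 0 := by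
  let νs : ℕ → ProbabilityMeasure I := fun N =>
    ⟨gridMeasure q N, isProbabilityMeasure_gridMeasure hq hq0 h00 N⟩
  obtain ⟨ν, -, hν⟩ := isCompact_univ.exists_mapClusterPt (f := atTop) (u := νs) (by simp)
  refine ⟨ν, fun k => ?_⟩
  have hcont : Continuous fun P : ProbabilityMeasure I => ∫ x : I, (x : ℝ) ^ k ∂(P : Measure I) :=
    ProbabilityMeasure.continuous_integral_continuousMap
      (⟨fun x => (x : ℝ) ^ k, by fun_prop⟩ : C(I, ℝ))
  exact eq_of_nhds_neBot
    ((hν.tendsto_comp hcont.continuousAt).clusterPt.mono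
      (tendsto_integral_pow_gridMeasure hq hq0 h00 k)).neBot

theorem exists_isProbabilityMeasure_Icc_integral_pow_mul_one_sub_pow_eq (hq0 : ∀ k d, 0 ≤ q k d)
    (h00 : q 0 0 = 1) :
    ∃ ν : Measure ℝ, IsProbabilityMeasure ν ∧ ν (Set.Icc 0 1) = 1 ∧
      ∀ k d, ∫ p, p ^ k * (1 - p) ^ d ∂ν = q k d := by
  obtain ⟨ν, hν⟩ := exists_probabilityMeasure_integral_pow_eq hq hq0 h00
  have hval : MeasurableEmbedding ((↑) : I → ℝ) := .subtype_coe measurableSet_Icc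
  refine ⟨(ν : Measure I).map (↑), Measure.isProbabilityMeasure_map hval.measurable.aemeasurable,
    by simp [hval.map_apply], fun k d => ?_⟩
  rw [hval.integral_map]
  induction d generalizing k with
  | zero => simpa using hν k
  | succ d ih =>
    have hint (m : ℕ) : Integrable (fun x : I => (x : ℝ) ^ m * (1 - x) ^ d) (ν : Measure I) :=
      (by fun_prop : Continuous _).integrable_of_hasCompactSupport
        (HasCompactSupport.of_compactSpace _)
    calc ∫ x : I, (x : ℝ) ^ k * (1 - x) ^ (d + 1) ∂(ν : Measure I)
        = ∫ x : I, ((x : ℝ) ^ k * (1 - x) ^ d - (x : ℝ) ^ (k + 1) * (1 - x) ^ d)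
            ∂(ν : Measure I) := by
          congr with x
          ring
      _ = q k (d + 1) := by rw [integral_sub (hint k) (hint (k + 1)), ih, ih, hq k d]; ring

end MomentTable

def trueCount {α : Type*} [Fintype α] (a : α → Bool) : ℕ := #{i | a i}

theorem trueCount_le {n : ℕ} (a : Fin n → Bool) : trueCount a ≤ n :=
  (card_filter_le _ _).trans_eq (card_fin n)

def initPattern (n k : ℕ) : Fin n → Bool := fun i => i < k

theorem trueCount_initPattern {n k : ℕ} (hk : k ≤ n) : trueCount (initPattern n k) = k := by
  simp [trueCount, initPattern, Fin.card_filter_val_lt, hk]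

theorem trueCount_snoc {n : ℕ} (a : Fin n → Bool) (b : Bool) :
    trueCount (Fin.snoc a b : Fin (n + 1) → Bool) = trueCount a + b.toNat := by
  simp only [trueCount, card_filter, Fin.sum_univ_castSucc, Fin.snoc_castSucc, Fin.snoc_last]
  cases b <;> rfl

theorem prod_ite_eq_pow_trueCount_mul_pow {α M : Type*} [Fintype α] [CommMonoid M]
    (a : α → Bool) (x y : M) :
    ∏ i, (if a i then x else y) = x ^ trueCount a * y ^ (Fintype.card α - trueCount a) := by
  rw [prod_ite, prod_const, prod_const, trueCount, ← card_univ,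
    ← card_filter_add_card_filter_not (s := univ) (fun i => a i = true), Nat.add_sub_cancel_left]

theorem exists_perm_comp_eq_of_trueCount_eq {α : Type*} [Fintype α]
    {a b : α → Bool} (h : trueCount a = trueCount b) : ∃ τ : Equiv.Perm α, b ∘ τ = a := by
  have hcard : Fintype.card {i // a i} = Fintype.card {i // b i} := by
    simpa [Fintype.card_subtype, trueCount] using h
  let e : {i // a i} ≃ {i // b i} := Fintype.equivOfCardEq hcard
  let f : {i // ¬ a i} ≃ {i // ¬ b i} := Fintype.equivOfCardEq <| by
    rw [Fintype.card_subtype_compl, Fintype.card_subtype_compl, hcard]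
  refine ⟨e.subtypeCongr f, funext fun i => ?_⟩
  rw [Function.comp_apply, Equiv.subtypeCongr, Equiv.trans_apply, Equiv.trans_apply]
  by_cases hi : a i
  · rw [Equiv.sumCompl_symm_apply_of_pos (p := fun j => a j = true) hi, Equiv.sumCongr_apply,
      Sum.map_inl, Equiv.sumCompl_apply_inl, hi]
    exact (e ⟨i, hi⟩).2
  · rw [Equiv.sumCompl_symm_apply_of_neg (p := fun j => a j = true) hi, Equiv.sumCongr_apply,
      Sum.map_inr, Equiv.sumCompl_apply_inr]
    simpa [hi] using (f ⟨i, hi⟩).2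

section

variable {Ω : Type*}

def patternEvent (X : ℕ → Ω → Bool) {n : ℕ} (a : Fin n → Bool) : Set Ω :=
  {ω | ∀ i : Fin n, X i ω = a i}

theorem patternEvent_snoc (X : ℕ → Ω → Bool) {n : ℕ} (a : Fin n → Bool) (b : Bool) :
    patternEvent X (Fin.snoc a b : Fin (n + 1) → Bool) = patternEvent X a ∩ {ω | X n ω = b} := by
  ext ω
  simp [patternEvent, Fin.forall_fin_succ']

theorem preimage_singleton_eq_patternEvent (X : ℕ → Ω → Bool) {n : ℕ} (π : Equiv.Perm (Fin n))
    (a : Fin n → Bool) :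
    (fun ω => fun i : Fin n => X (π i : Fin n).val ω) ⁻¹' {a} = patternEvent X (a ∘ π.symm) := by
  ext ω
  simp only [patternEvent, Set.mem_preimage, Set.mem_singleton_iff, funext_iff, Set.mem_ofPred_eq,
    Function.comp_apply]
  rw [π.forall_congr_left]
  simp

variable [MeasurableSpace Ω] {μ : Measure Ω} {X : ℕ → Ω → Bool}

def Exchangeable (μ : Measure Ω) (X : ℕ → Ω → Bool) : Prop :=
  ∀ (n : ℕ) (π : Equiv.Perm (Fin n)),
    Measure.map (fun ω => fun i : Fin n => X (π i : Fin n).val ω) μ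
      = Measure.map (fun ω => fun i : Fin n => X i.val ω) μ

theorem exchangeable_iff (hX : ∀ i, Measurable (X i)) :
    Exchangeable μ X ↔
      ∀ n (a : Fin n → Bool) (π : Equiv.Perm (Fin n)),
        μ (patternEvent X (a ∘ π)) = μ (patternEvent X a) := by
  have hmeas {n : ℕ} (π : Equiv.Perm (Fin n)) :
      Measurable fun ω => fun i : Fin n => X (π i : Fin n).val ω :=
    measurable_pi_lambda _ fun i => hX _
  refine forall_congr' fun n => ?_
  calc _ ↔ ∀ (π : Equiv.Perm (Fin n)) a,
        μ (patternEvent X (a ∘ π.symm)) = μ (patternEvent X a) := by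
        refine forall_congr' fun π => ?_
        rw [Measure.ext_iff_singleton]
        refine forall_congr' fun a => ?_
        rw [Measure.map_apply (hmeas π) (measurableSet_singleton a),
          Measure.map_apply (measurable_pi_lambda _ fun i => hX _) (measurableSet_singleton a),
          preimage_singleton_eq_patternEvent X,
          show (fun ω => fun i : Fin n => X i.val ω) ⁻¹' {a} = patternEvent X a from
            preimage_singleton_eq_patternEvent X 1 a]
    _ ↔ _ := ⟨fun h a π => by simpa using h π.symm a, fun h π a => by simpa using h a π.symm⟩

theorem measure_patternEvent_eq_of_trueCount_eq (hX : ∀ i, Measurable (X i))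
    (hexch : Exchangeable μ X) {n : ℕ} {a b : Fin n → Bool} (h : trueCount a = trueCount b) :
    μ (patternEvent X a) = μ (patternEvent X b) := by
  obtain ⟨τ, rfl⟩ := exists_perm_comp_eq_of_trueCount_eq h
  exact (exchangeable_iff hX).1 hexch n b τ

theorem measure_patternEvent_eq_add (hX : ∀ i, Measurable (X i)) {n : ℕ} (a : Fin n → Bool) :
    μ (patternEvent X a) = μ (patternEvent X (Fin.snoc a true : Fin (n + 1) → Bool))
      + μ (patternEvent X (Fin.snoc a false : Fin (n + 1) → Bool)) := by
  rw [patternEvent_snoc, patternEvent_snoc,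
    ← measure_inter_add_sdiff (patternEvent X a) (hX n (measurableSet_singleton true))]
  congr 2
  ext ω
  simp

theorem measure_patternEvent_initPattern_eq_add (hX : ∀ i, Measurable (X i))
    (hexch : Exchangeable μ X) {n k : ℕ} (hk : k ≤ n) :
    μ (patternEvent X (initPattern n k))
      = μ (patternEvent X (initPattern (n + 1) (k + 1)))
        + μ (patternEvent X (initPattern (n + 1) k)) := by
  rw [measure_patternEvent_eq_add hX]
  congr 1 <;> apply measure_patternEvent_eq_of_trueCount_eq hX hexch <;>
    simp [trueCount_snoc, trueCount_initPattern, hk, hk.trans n.le_succ]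

theorem Exchangeable.exists_mixture [IsProbabilityMeasure μ] (hX : ∀ i, Measurable (X i))
    (hexch : Exchangeable μ X) :
    ∃ ν : Measure ℝ, IsProbabilityMeasure ν ∧ ν (Set.Icc 0 1) = 1 ∧
      ∀ n (a : Fin n → Bool), μ (patternEvent X a)
        = ENNReal.ofReal (∫ p, (∏ i : Fin n, if a i then p else 1 - p) ∂ν) := by
  obtain ⟨ν, hν, hIcc, hmom⟩ := exists_isProbabilityMeasure_Icc_integral_pow_mul_one_sub_pow_eq
    (q := fun k d => (μ (patternEvent X (initPattern (k + d) k))).toReal)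
    (fun k d => by
      rw [measure_patternEvent_initPattern_eq_add hX hexch (k.le_add_right d),
        ENNReal.toReal_add (measure_ne_top _ _) (measure_ne_top _ _), Nat.add_right_comm k 1 d]
      rfl)
    (fun _ _ => ENNReal.toReal_nonneg) (by simp [patternEvent])
  refine ⟨ν, hν, hIcc, fun n a => ?_⟩
  simp_rw [prod_ite_eq_pow_trueCount_mul_pow, Fintype.card_fin]
  rw [hmom, Nat.add_sub_cancel' (trueCount_le a), ENNReal.ofReal_toReal (measure_ne_top _ _),
    measure_patternEvent_eq_of_trueCount_eq hX hexch (trueCount_initPattern (trueCount_le a)).symm]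

end

/-- de Finetti: a sequence of `{0,1}`-valued random variables is
exchangeable iff it is a mixture of i.i.d. Bernoulli sequences. -/
theorem deFinetti
    {Ω : Type*} [MeasurableSpace Ω] (μ : Measure Ω) [IsProbabilityMeasure μ]
    (X : ℕ → Ω → Bool) (hX : ∀ i, Measurable (X i)) :
    (∀ (n : ℕ) (π : Equiv.Perm (Fin n)),
        Measure.map (fun ω => fun i : Fin n => X (π i : Fin n).val ω) μ
          = Measure.map (fun ω => fun i : Fin n => X i.val ω) μ)
      ↔
    (∃ ν : Measure ℝ, IsProbabilityMeasure ν ∧ ν (Set.Icc (0:ℝ) 1) = 1 ∧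
      ∀ (n : ℕ) (a : Fin n → Bool),
        μ {ω | ∀ i : Fin n, X i.val ω = a i}
          = ENNReal.ofReal (∫ p, (∏ i : Fin n, if a i then p else 1 - p) ∂ν)) := by
  refine ⟨fun hexch => Exchangeable.exists_mixture hX hexch, ?_⟩
  rintro ⟨ν, -, -, hν⟩
  refine (exchangeable_iff hX).2 fun n a π => ?_
  calc μ (patternEvent X (a ∘ π))
      = ENNReal.ofReal (∫ p, (∏ i : Fin n, if a (π i) then p else 1 - p) ∂ν) := hν n (a ∘ π)
    _ = ENNReal.ofReal (∫ p, (∏ i : Fin n, if a i then p else 1 - p) ∂ν) := by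
      congr 2 with p
      exact Equiv.prod_comp π fun i => if a i then p else 1 - p
    _ = μ (patternEvent X a) := (hν n a).symm
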